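/- Let P be a digraph with boundary ∂P, and let 𝒮_{P\∂P} be the set of SCCs of P disjoint from ∂P. Suppose G ⊇ P is a digraph whose paths entering/leaving V(P)\∂P pass through ∂P. Then the number of SCCs of G contained in V(P)\∂P equals |𝒮_{P\∂P}| minus the number of S ∈ 𝒮_{P\∂P} for which there exists an SCC S' of G with S ⊊ S' (equivalently, with S' ∩ ∂P ≠ ∅ and S ⊆ Π_P(S' ∩ ∂P)). Moreover, each such S is contained in exactly one SCC of G. -/

import Mathlib

/-! An SCC of `G` lying inside `VP \ bP` only uses edges of `P` (every edge leaving one of its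
vertices is an edge of `P`), so it is already an SCC of `P`, and it is maximal in `G`.
Conversely every SCC `S` of `P` sits inside the SCC of `G` through any of its vertices, which is
the only SCC of `G` containing `S`; if the inclusion is not proper, `S` is an SCC of `G`. Hence
the interior SCCs of `G` are exactly the boundary-free SCCs of `P` minus the merged ones. -/

open Relation

section StrongComponent

variable {V : Type*}

def strongComponent (R : V → V → Prop) (r : V) : Set V :=
  {w | ReflTransGen R r w ∧ ReflTransGen R w r}

variable {R R' : V → V → Prop} {r w : V}

theorem self_mem_strongComponent (R : V → V → Prop) (r : V) : r ∈ strongComponent R r :=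
  ⟨.refl, .refl⟩

theorem strongComponent_eq_of_mem (h : w ∈ strongComponent R r) :
    strongComponent R w = strongComponent R r := by
  ext x
  exact ⟨fun ⟨hwx, hxw⟩ => ⟨h.1.trans hwx, hxw.trans h.2⟩,
    fun ⟨hrx, hxr⟩ => ⟨h.2.trans hrx, hxr.trans h.1⟩⟩

theorem strongComponent_mono (h : ∀ u v, R u v → R' u v) (r : V) :
    strongComponent R r ⊆ strongComponent R' r :=
  fun _ ⟨hrx, hxr⟩ => ⟨ReflTransGen.mono h _ _ hrx, ReflTransGen.mono h _ _ hxr⟩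

theorem strongComponent_subset {s : Set V} (hs : ∀ u v, R u v → v ∈ s) (hr : r ∈ s) :
    strongComponent R r ⊆ s := by
  rintro x ⟨hrx, -⟩
  rcases hrx.cases_tail with rfl | ⟨c, -, hcx⟩
  exacts [hr, hs c x hcx]

/-- A path between two vertices of an SCC stays inside the SCC. -/
theorem reflTransGen_of_mem_strongComponent {s : Set V} {a b : V}
    (hsub : strongComponent R r ⊆ s) (hR : ∀ u v, R u v → u ∈ s → R' u v)
    (ha : a ∈ strongComponent R r) (hb : b ∈ strongComponent R r) (hab : ReflTransGen R a b) :
    ReflTransGen R' a b := by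
  induction hab using ReflTransGen.head_induction_on with
  | refl => exact .refl
  | head hac hcb ih =>
    have hc : _ ∈ strongComponent R r := ⟨ha.1.tail hac, hcb.trans hb.2⟩
    exact .head (hR _ _ hac (hsub ha)) (ih hc)

theorem strongComponent_eq_of_subset {s : Set V} (hR' : ∀ u v, R' u v → R u v)
    (hR : ∀ u v, R u v → u ∈ s → R' u v) (hsub : strongComponent R r ⊆ s) :
    strongComponent R' r = strongComponent R r := by
  refine (strongComponent_mono hR' r).antisymm fun x hx => ⟨?_, ?_⟩
  · exact reflTransGen_of_mem_strongComponent hsub hR (self_mem_strongComponent R r) hx hx.1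
  · exact reflTransGen_of_mem_strongComponent hsub hR hx (self_mem_strongComponent R r) hx.2

theorem existsUnique_strongComponent_superset (h : ∀ u v, R u v → R' u v) (r : V) :
    ∃! S, (∃ r', S = strongComponent R' r') ∧ strongComponent R r ⊆ S := by
  refine ⟨strongComponent R' r, ⟨⟨r, rfl⟩, strongComponent_mono h r⟩, ?_⟩
  rintro _ ⟨⟨r', rfl⟩, hsub⟩
  exact (strongComponent_eq_of_mem (hsub (self_mem_strongComponent R r))).symm

end StrongComponent

section Piece

variable {V : Type*} (E EP : V → V → Prop) (VP bP : Set V)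

def interiorComponents : Set (Set V) :=
  {S | (∃ r, S = strongComponent E r) ∧ S ⊆ VP \ bP}

def boundaryFreeComponents : Set (Set V) :=
  {S | (∃ r ∈ VP, S = strongComponent EP r) ∧ S ∩ bP = ∅}

def mergedComponents : Set (Set V) :=
  {S | S ∈ boundaryFreeComponents EP VP bP ∧ ∃ S', (∃ r, S' = strongComponent E r) ∧ S ⊂ S'}

variable {E EP VP bP}

theorem interiorComponents_eq_diff (hEP : ∀ u v, EP u v → E u v ∧ u ∈ VP ∧ v ∈ VP)
    (hclosed : ∀ u v, E u v → (u ∈ VP \ bP ∨ v ∈ VP \ bP) → EP u v) :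
    interiorComponents E VP bP =
      boundaryFreeComponents EP VP bP \ mergedComponents E EP VP bP := by
  have hEP_le : ∀ u v, EP u v → E u v := fun u v h => (hEP u v h).1
  ext S
  constructor
  · rintro ⟨⟨r, rfl⟩, hsub⟩
    have hEq : strongComponent EP r = strongComponent E r :=
      strongComponent_eq_of_subset hEP_le (fun u v h hu => hclosed u v h (.inl hu)) hsub
    obtain ⟨-, hdisj⟩ := Set.subset_sdiff.mp hsub
    refine ⟨⟨⟨r, (hsub (self_mem_strongComponent E r)).1, hEq.symm⟩,
      Set.disjoint_iff_inter_eq_empty.mp hdisj⟩, ?_⟩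
    rintro ⟨-, _, ⟨r', rfl⟩, hss⟩
    rw [← strongComponent_eq_of_mem (hss.subset (self_mem_strongComponent E r))] at hss
    exact hss.ne rfl
  · rintro ⟨⟨⟨r, hr, rfl⟩, hdisj⟩, hnot⟩
    have hEq : strongComponent EP r = strongComponent E r :=
      (strongComponent_mono hEP_le r).eq_of_not_ssubset fun hss =>
        hnot ⟨⟨⟨r, hr, rfl⟩, hdisj⟩, _, ⟨r, rfl⟩, hss⟩
    exact ⟨⟨r, hEq⟩, Set.subset_sdiff.mpr
      ⟨strongComponent_subset (fun u v h => (hEP u v h).2.2) hr,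
        Set.disjoint_iff_inter_eq_empty.mpr hdisj⟩⟩

end Piece

theorem stmt16_general {V : Type*} [Fintype V] (E EP : V → V → Prop) (VP bP : Set V)
    (hEP : ∀ u v, EP u v → E u v ∧ u ∈ VP ∧ v ∈ VP)
    (hclosed : ∀ u v, E u v → (u ∈ VP \ bP ∨ v ∈ VP \ bP) → EP u v) :
    ({S : Set V |
        (∃ r, S = {w | Relation.ReflTransGen E r w ∧ Relation.ReflTransGen E w r}) ∧
        S ⊆ VP \ bP}.ncard
      = {S : Set V |
          (∃ r ∈ VP, S = {w | Relation.ReflTransGen EP r w ∧ Relation.ReflTransGen EP w r}) ∧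
          S ∩ bP = ∅}.ncard
        - {S : Set V |
            ((∃ r ∈ VP, S = {w | Relation.ReflTransGen EP r w ∧ Relation.ReflTransGen EP w r}) ∧
             S ∩ bP = ∅) ∧
            ∃ S' : Set V,
              (∃ r, S' = {w | Relation.ReflTransGen E r w ∧ Relation.ReflTransGen E w r}) ∧
              S ⊂ S'}.ncard) ∧
    (∀ S : Set V,
      ((∃ r ∈ VP, S = {w | Relation.ReflTransGen EP r w ∧ Relation.ReflTransGen EP w r}) ∧
       S ∩ bP = ∅) →
      ∃! S' : Set V,
        (∃ r, S' = {w | Relation.ReflTransGen E r w ∧ Relation.ReflTransGen E w r}) ∧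
        S ⊆ S') := by
  refine ⟨?_, ?_⟩
  · exact (congrArg Set.ncard (interiorComponents_eq_diff hEP hclosed)).trans
      (Set.ncard_sdiff fun _ hS => hS.1)
  · rintro S ⟨⟨r, -, rfl⟩, -⟩
    exact existsUnique_strongComponent_superset (fun u v h => (hEP u v h).1) r

/-- Counting SCCs of `G` contained in `VP \ bP`: it equals the
number of SCCs of the piece `P` avoiding the boundary, minus the number of such
SCCs that are properly contained in some SCC of `G`; moreover each boundary-free
SCC of `P` is contained in exactly one SCC of `G`. -/
theorem stmt16 {V : Type*} [Fintype V] (E EP : V → V → Prop) (VP bP : Set V)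
    (hbP : bP ⊆ VP)
    (hEP : ∀ u v, EP u v → E u v ∧ u ∈ VP ∧ v ∈ VP)
    (hclosed : ∀ u v, E u v → (u ∈ VP \ bP ∨ v ∈ VP \ bP) → EP u v) :
    ({S : Set V |
        (∃ r, S = {w | Relation.ReflTransGen E r w ∧ Relation.ReflTransGen E w r}) ∧
        S ⊆ VP \ bP}.ncard
      = {S : Set V |
          (∃ r ∈ VP, S = {w | Relation.ReflTransGen EP r w ∧ Relation.ReflTransGen EP w r}) ∧
          S ∩ bP = ∅}.ncard
        - {S : Set V |
            ((∃ r ∈ VP, S = {w | Relation.ReflTransGen EP r w ∧ Relation.ReflTransGen EP w r}) ∧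
             S ∩ bP = ∅) ∧
            ∃ S' : Set V,
              (∃ r, S' = {w | Relation.ReflTransGen E r w ∧ Relation.ReflTransGen E w r}) ∧
              S ⊂ S'}.ncard) ∧
    (∀ S : Set V,
      ((∃ r ∈ VP, S = {w | Relation.ReflTransGen EP r w ∧ Relation.ReflTransGen EP w r}) ∧
       S ∩ bP = ∅) →
      ∃! S' : Set V,
        (∃ r, S' = {w | Relation.ReflTransGen E r w ∧ Relation.ReflTransGen E w r}) ∧
        S ⊆ S') :=
  stmt16_general E EP VP bP hEP hclosed
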